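/- If an n-by-n real matrix A is TP_1 (all entries positive) and D_k(A) is TP_1 (all entries positive) for every 1 ≤ k ≤ n-1, then A is totally positive. -/

import Mathlib

open Matrix

open Matrix

/-- `A` is totally positive: every minor (with strictly increasing row and
column index selections) is positive. -/
def IsTP {α β : Type} [LinearOrder α] [LinearOrder β] (A : Matrix α β ℝ) : Prop :=
  ∀ (l : ℕ) (r : Fin l → α) (c : Fin l → β), StrictMono r → StrictMono c →
    0 < (A.submatrix r c).det

/-- `A` is `TP_k`: every minor of order at most `k` is positive. -/
def IsTPk {α β : Type} [LinearOrder α] [LinearOrder β] (A : Matrix α β ℝ) (k : ℕ) : Prop :=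
  ∀ (l : ℕ), l ≤ k → ∀ (r : Fin l → α) (c : Fin l → β), StrictMono r → StrictMono c →
    0 < (A.submatrix r c).det

/-- `k`-subsets of `{1,…,n}`, encoded as strictly increasing tuples. -/
abbrev STuple (n k : ℕ) : Type := {f : Fin k → Fin n // StrictMono f}

noncomputable instance lexPi {n k : ℕ} : LinearOrder (Lex (Fin k → Fin n)) :=
  @Pi.Lex.linearOrder (Fin k) (fun _ => Fin n) _
    Finite.to_wellFoundedLT _

/-- The lexicographic linear order on `k`-subsets. -/
noncomputable instance {n k : ℕ} : LinearOrder (STuple n k) :=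
  LinearOrder.lift' (fun s => toLex s.1) (fun _ _ h => Subtype.ext (congrArg ofLex h))

/-- The `k`-th compound matrix of `A`: the matrix of all `k×k` minors of `A`,
rows and columns indexed by `k`-subsets ordered lexicographically. -/
noncomputable def compound {n : ℕ} (A : Matrix (Fin n) (Fin n) ℝ) (k : ℕ) :
    Matrix (STuple n k) (STuple n k) ℝ :=
  fun s t => (A.submatrix s.1 t.1).det

/-- The `k`-th Dodgson condensation matrix of `A`: the `(n-k) × (n-k)` matrix of
contiguous minors of order `k+1` (0-indexed positions). -/
noncomputable def Dmat {n : ℕ} (A : Matrix (Fin n) (Fin n) ℝ) (k : ℕ) :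
    Matrix (Fin (n - k)) (Fin (n - k)) ℝ :=
  fun i j =>
    (A.submatrix
      (fun p : Fin (k + 1) => (⟨i.1 + p.1, by have := i.2; have := p.2; omega⟩ : Fin n))
      (fun p : Fin (k + 1) => (⟨j.1 + p.1, by have := j.2; have := p.2; omega⟩ : Fin n))).det

/-- The contiguous minor of `A` of order `sz` with top-left position `(i, j)`
(0-indexed): `det A[{i,…,i+sz-1},{j,…,j+sz-1}]`. -/
noncomputable def cminor {n : ℕ} (A : Matrix (Fin n) (Fin n) ℝ) (sz i j : ℕ)
    (hi : i + sz ≤ n) (hj : j + sz ≤ n) : ℝ :=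
  (A.submatrix (fun p : Fin sz => (⟨i + p.1, by have := p.2; omega⟩ : Fin n))
               (fun p : Fin sz => (⟨j + p.1, by have := p.2; omega⟩ : Fin n))).det

/-!
Fekete's criterion, by induction on the order of the minor. For an `(m + 3) × (m + 2)` matrix
`M` and an interior row `p`, evaluating the cofactor relation `∑ₓ (-1)^x det M[∖x] • M x = 0`
in the first row of the minor whose remaining rows are those outside `{0, p, last}` (first
column dropped) leaves three terms:
`det M[∖p] · det M[∖{0, last}; ∖0]
  = det M[∖0] · det M[∖{p, last}; ∖0] + det M[∖last] · det M[∖{0, p}; ∖0]`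
(`M[S; T]` removes the rows `S` and the columns `T`). So if all minors of order `m + 1` are
positive, the minors omitting the first and the last row control the one omitting row `p`.
A row selection with a gap is `ρ ∘ p.succAbove` for the selection `ρ` filling the gap at `p`,
and dropping an extreme index of `ρ` shortens the spread `r last - r 0`; induction on the spreads
of the row and column selections (transposing for columns) thus reduces every minor of order
`m + 2` to a contiguous one, i.e. to an entry of `D_{m+1}(A)`.
-/

namespace Matrix

variable {R : Type*} [CommRing R]

theorem sum_neg_one_pow_mul_det_smul_row_eq_zero {k : ℕ}
    (M : Matrix (Fin (k + 1)) (Fin k) R) :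
    ∑ x : Fin (k + 1), ((-1) ^ (x : ℕ) * (M.submatrix x.succAbove id).det) • M x = 0 := by
  ext c
  let B : Matrix (Fin (k + 1)) (Fin (k + 1)) R := fun x => Fin.cons (M x c) (M x)
  have hB : B.det = 0 := det_zero_of_column_eq (Fin.succ_ne_zero c).symm fun _ => rfl
  rw [det_succ_column_zero] at hB
  have hminor (x : Fin (k + 1)) : B.submatrix x.succAbove Fin.succ = M.submatrix x.succAbove id :=
    rfl
  simpa [Finset.sum_apply, hminor, B, mul_assoc, mul_comm (M _ c)] using hB

theorem plucker_three_term {m : ℕ}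
    (M : Matrix (Fin (m + 3)) (Fin (m + 2)) R) (q : Fin (m + 1)) :
    (M.submatrix q.castSucc.succ.succAbove id).det *
        (M.submatrix (Fin.succ ∘ Fin.castSucc) Fin.succ).det =
      (M.submatrix Fin.succ id).det *
          (M.submatrix (q.castSucc.succ.succAbove ∘ Fin.castSucc) Fin.succ).det +
        (M.submatrix Fin.castSucc id).det *
          (M.submatrix (q.castSucc.succ.succAbove ∘ Fin.succ) Fin.succ).det := by
  set p : Fin (m + 3) := q.castSucc.succ
  set u : Fin (m + 3) → Fin (m + 1) → R := M.submatrix id Fin.succ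
  let ν : Fin m → Fin (m + 3) := fun i => (q.succAbove i).castSucc.succ
  let D : (Fin (m + 1) → R) [⋀^Fin (m + 1)]→ₗ[R] R := detRowAlternating
  let ℓ : (Fin (m + 1) → R) →ₗ[R] R := D.toMultilinearMap.toLinearMap (Fin.cons 0 (u ∘ ν)) 0
  have hℓ (v : Fin (m + 1) → R) : ℓ v = D (Fin.cons v (u ∘ ν)) := by
    simp [ℓ, MultilinearMap.toLinearMap_apply, Fin.update_cons_zero]
  have hdet (f : Fin (m + 1) → Fin (m + 3)) : (M.submatrix f Fin.succ).det = D (u ∘ f) := rfl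
  have hsum : ∑ x : Fin (m + 3), ((-1) ^ (x : ℕ) * (M.submatrix x.succAbove id).det) * ℓ (u x)
      = 0 := by
    have := congrArg (ℓ ∘ₗ LinearMap.funLeft R R Fin.succ)
      (sum_neg_one_pow_mul_det_smul_row_eq_zero M)
    simp only [map_sum, map_smul, map_zero, smul_eq_mul] at this
    exact this
  have hmid (i : Fin m) : ℓ (u (ν i)) = 0 := by
    rw [hℓ]; exact D.map_eq_zero_of_eq _ (i := 0) (j := i.succ) rfl (Fin.succ_ne_zero i).symm
  have hfirst : (M.submatrix (p.succAbove ∘ Fin.castSucc) Fin.succ).det = ℓ (u 0) := by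
    have : u ∘ p.succAbove ∘ Fin.castSucc = Fin.cons (u 0) (u ∘ ν) := by
      funext i
      refine Fin.cases ?_ (fun i => ?_) i
      · simp [p]
      · simp [p, ν]
    rw [hdet, hℓ, this]
  have hmiddle : (M.submatrix (Fin.succ ∘ Fin.castSucc) Fin.succ).det
      = (-1) ^ (q : ℕ) * ℓ (u p) := by
    have : u ∘ Fin.succ ∘ Fin.castSucc = q.insertNth (u p) (u ∘ ν) := by
      funext i
      refine q.succAboveCases ?_ (fun i => ?_) i
      · simp [p]
      · simp [ν]
    rw [hdet, hℓ, this, D.map_insertNth]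
    simp [Matrix.vecCons, zsmul_eq_mul]
  have hlast : (M.submatrix (p.succAbove ∘ Fin.succ) Fin.succ).det
      = (-1) ^ m * ℓ (u (Fin.last _)) := by
    have : u ∘ p.succAbove ∘ Fin.succ = (Fin.last m).insertNth (u (Fin.last _)) (u ∘ ν) := by
      funext i
      refine (Fin.last m).succAboveCases ?_ (fun i => ?_) i
      · simp [p, Fin.succAbove_ne_last_last, Fin.ext_iff, q.isLt.ne]
      · simp [p, ν]
    rw [hdet, hℓ, this, D.map_insertNth]
    simp [Matrix.vecCons, zsmul_eq_mul]
  rw [Fin.sum_univ_succ, Fin.sum_univ_castSucc, Fintype.sum_eq_single q fun i hi => ?_] at hsum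
  · rw [hmiddle, hlast, hfirst]
    simp only [Fin.val_zero, pow_zero, one_mul, Fin.succAbove_zero, Fin.val_succ, Fin.val_castSucc,
      Fin.succ_last, Fin.val_last, Fin.succAbove_last, Nat.succ_eq_add_one] at hsum
    linear_combination -hsum
  · obtain ⟨j, rfl⟩ := Fin.exists_succAbove_eq hi
    exact mul_eq_zero_of_right _ (hmid j)

theorem det_submatrix_succAbove_pos [LinearOrder R] [IsStrictOrderedRing R] {m : ℕ}
    (M : Matrix (Fin (m + 3)) (Fin (m + 2)) R) (q : Fin (m + 1))
    (hminor : ∀ f : Fin (m + 1) → Fin (m + 3), StrictMono f → 0 < (M.submatrix f Fin.succ).det)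
    (hfirst : 0 < (M.submatrix Fin.succ id).det) (hlast : 0 < (M.submatrix Fin.castSucc id).det) :
    0 < (M.submatrix q.castSucc.succ.succAbove id).det := by
  refine pos_of_mul_pos_left ?_ (hminor _ (Fin.strictMono_succ.comp Fin.strictMono_castSucc)).le
  rw [M.plucker_three_term q]
  exact add_pos
    (mul_pos hfirst (hminor _ ((Fin.strictMono_succAbove _).comp Fin.strictMono_castSucc)))
    (mul_pos hlast (hminor _ ((Fin.strictMono_succAbove _).comp Fin.strictMono_succ)))

end Matrix

def spread {k n : ℕ} (r : Fin (k + 1) → Fin n) : ℕ := r (Fin.last k) - r 0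

theorem spread_comp_succ_lt {k n : ℕ} {r : Fin (k + 2) → Fin n} (hr : StrictMono r) :
    spread (r ∘ Fin.succ) < spread r := by
  have h0 : r 0 < r (Fin.succ 0) := hr (Fin.succ_pos 0)
  have h1 : r (Fin.succ 0) ≤ r (Fin.last (k + 1)) := hr.monotone (Fin.le_last _)
  show (r (Fin.last (k + 1)) : ℕ) - r (Fin.succ 0) < r (Fin.last (k + 1)) - r 0
  rw [Fin.lt_def] at h0
  rw [Fin.le_def] at h1
  omega

theorem spread_comp_castSucc_lt {k n : ℕ} {r : Fin (k + 2) → Fin n} (hr : StrictMono r) :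
    spread (r ∘ Fin.castSucc) < spread r := by
  have h0 : r 0 ≤ r (Fin.last k).castSucc := hr.monotone (Fin.zero_le _)
  have h1 : r (Fin.last k).castSucc < r (Fin.last (k + 1)) := hr (Fin.castSucc_lt_last _)
  show (r (Fin.last k).castSucc : ℕ) - r 0 < r (Fin.last (k + 1)) - r 0
  rw [Fin.le_def] at h0
  rw [Fin.lt_def] at h1
  omega

theorem spread_insertNth {k n : ℕ} (r : Fin (k + 2) → Fin n) (j : Fin (k + 1)) (t : Fin n) :
    spread (j.castSucc.succ.insertNth t r) = spread r := by
  have h0 : j.castSucc.succ.succAbove 0 = 0 := Fin.succAbove_ne_zero_zero (Fin.succ_ne_zero _)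
  have hl : j.castSucc.succ.succAbove (Fin.last (k + 1)) = Fin.last (k + 2) :=
    Fin.succAbove_ne_last_last (by simp [Fin.ext_iff]; omega)
  simp only [spread, ← h0, ← hl, Fin.insertNth_apply_succAbove]

theorem strictMono_insertNth_of_lt_of_lt {α : Type*} [Preorder α] {k : ℕ}
    {r : Fin (k + 2) → α} (hr : StrictMono r) {j : Fin (k + 1)} {t : α}
    (hjt : r j.castSucc < t) (htj : t < r j.succ) :
    StrictMono (j.castSucc.succ.insertNth t r) := by
  refine (Fin.strictMono_insertNth_iff _ _ _).mpr ⟨hr, fun i hi => ?_, fun i hi => ?_⟩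
  · exact (hr.monotone (by simpa using hi)).trans_lt hjt
  · exact htj.trans_le (hr.monotone (Fin.castSucc_lt_iff_succ_le.mp (by simpa using hi)))

theorem contiguous_or_exists_gap {k n : ℕ} {r : Fin (k + 1) → Fin n} (hr : StrictMono r) :
    (∀ x, (r x : ℕ) = r 0 + x) ∨ ∃ j : Fin k, ∃ t, r j.castSucc < t ∧ t < r j.succ := by
  refine or_iff_not_imp_right.mpr fun hgap x => ?_
  push Not at hgap
  induction x using Fin.induction with
  | zero => rfl
  | succ j ih =>
    have hlt : r j.castSucc < r j.succ := hr Fin.castSucc_lt_succ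
    have hle : (r j.succ : ℕ) ≤ r j.castSucc + 1 := by
      by_contra! h
      exact (hgap j ⟨r j.castSucc + 1, by omega⟩ (Fin.lt_def.mpr (by simp))).not_gt
        (Fin.lt_def.mpr (by simp; omega))
    rw [Fin.lt_def] at hlt
    simp only [Fin.val_succ, Fin.val_castSucc] at ih hlt hle ⊢
    omega

namespace Matrix

variable {R : Type*} [CommRing R] [LinearOrder R] [IsStrictOrderedRing R]
  {m n n' : ℕ} (A : Matrix (Fin n) (Fin n') R)

theorem det_submatrix_pos_of_row_gap
    (hlow : ∀ (r : Fin (m + 1) → Fin n) (c : Fin (m + 1) → Fin n'), StrictMono r → StrictMono c →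
      0 < (A.submatrix r c).det)
    {r : Fin (m + 2) → Fin n} {c : Fin (m + 2) → Fin n'} (hr : StrictMono r) (hc : StrictMono c)
    {j : Fin (m + 1)} {t : Fin n} (hjt : r j.castSucc < t) (htj : t < r j.succ)
    (ih : ∀ r' : Fin (m + 2) → Fin n, StrictMono r' → spread r' < spread r →
      0 < (A.submatrix r' c).det) :
    0 < (A.submatrix r c).det := by
  set ρ : Fin (m + 3) → Fin n := j.castSucc.succ.insertNth t r
  have hρ : StrictMono ρ := strictMono_insertNth_of_lt_of_lt hr hjt htj
  have hspread : spread ρ = spread r := spread_insertNth r j t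
  have hsub : A.submatrix r c = (A.submatrix ρ c).submatrix j.castSucc.succ.succAbove id := by
    rw [submatrix_submatrix, Fin.insertNth_comp_succAbove]; rfl
  rw [hsub]
  refine (A.submatrix ρ c).det_submatrix_succAbove_pos j
    (fun f hf => hlow _ _ (hρ.comp hf) (hc.comp Fin.strictMono_succ)) ?_ ?_
  · exact ih _ (hρ.comp Fin.strictMono_succ) (hspread ▸ spread_comp_succ_lt hρ)
  · exact ih _ (hρ.comp Fin.strictMono_castSucc) (hspread ▸ spread_comp_castSucc_lt hρ)

theorem det_submatrix_pos_of_contiguous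
    (hlow : ∀ (r : Fin (m + 1) → Fin n) (c : Fin (m + 1) → Fin n'), StrictMono r → StrictMono c →
      0 < (A.submatrix r c).det)
    (hcontig : ∀ (r : Fin (m + 2) → Fin n) (c : Fin (m + 2) → Fin n'),
      (∀ x, (r x : ℕ) = r 0 + x) → (∀ x, (c x : ℕ) = c 0 + x) → 0 < (A.submatrix r c).det)
    {r : Fin (m + 2) → Fin n} {c : Fin (m + 2) → Fin n'} (hr : StrictMono r) (hc : StrictMono c) :
    0 < (A.submatrix r c).det := by
  induction hN : spread r + spread c using Nat.strong_induction_on generalizing r c with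
  | _ N ih =>
  rcases contiguous_or_exists_gap hr with hr' | ⟨j, t, hjt, htj⟩
  · rcases contiguous_or_exists_gap hc with hc' | ⟨j, t, hjt, htj⟩
    · exact hcontig r c hr' hc'
    · rw [← det_transpose, transpose_submatrix]
      refine Aᵀ.det_submatrix_pos_of_row_gap (fun r c hr hc => ?_) hc hr hjt htj
        fun c' hc' hlt => ?_
      · rw [← transpose_submatrix, det_transpose]; exact hlow c r hc hr
      · rw [← transpose_submatrix, det_transpose]; exact ih _ (by omega) hr hc' rfl
  · exact A.det_submatrix_pos_of_row_gap hlow hr hc hjt htj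
      fun r' hr' hlt => ih _ (by omega) hr' hc rfl

end Matrix

theorem exists_Dmat_eq_det_submatrix {n k : ℕ} (A : Matrix (Fin n) (Fin n) ℝ)
    {r c : Fin (k + 1) → Fin n} (hr : ∀ x, (r x : ℕ) = r 0 + x) (hc : ∀ x, (c x : ℕ) = c 0 + x) :
    ∃ i j, Dmat A k i j = (A.submatrix r c).det := by
  have hrn := (r (Fin.last k)).isLt
  have hcn := (c (Fin.last k)).isLt
  rw [hr, Fin.val_last] at hrn
  rw [hc, Fin.val_last] at hcn
  refine ⟨⟨r 0, by omega⟩, ⟨c 0, by omega⟩, ?_⟩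
  unfold Dmat
  congr <;> funext x <;> ext <;> simp [hr x, hc x]

/-- If all entries of `A` are positive and all entries of every Dodgson
condensation matrix `D_k(A)` (`1 ≤ k ≤ n-1`) are positive, then `A` is totally
positive. -/
theorem totallyPos_of_Dmat_entries_pos {n : ℕ} (A : Matrix (Fin n) (Fin n) ℝ)
    (h0 : ∀ i j, 0 < A i j)
    (hD : ∀ k, 1 ≤ k → k ≤ n - 1 → ∀ i j, 0 < Dmat A k i j) :
    IsTP A := by
  have hpos : ∀ (m : ℕ) (r c : Fin (m + 1) → Fin n), StrictMono r → StrictMono c →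
      0 < (A.submatrix r c).det := by
    intro m
    induction m with
    | zero => intro r c _ _; rw [det_fin_one]; exact h0 _ _
    | succ m ih =>
      intro r c hr hc
      refine A.det_submatrix_pos_of_contiguous ih (fun r c hr hc => ?_) hr hc
      obtain ⟨i, j, hij⟩ := exists_Dmat_eq_det_submatrix A hr hc
      rw [← hij]
      exact hD _ (Nat.le_add_left 1 m) (by have := i.isLt; omega) i j
  intro l r c hr hc
  cases l with
  | zero => simp
  | succ m => exact hpos m r c hr hc
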